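/- arXiv:2503.19184 — 2 statements merged into one kernel-verified Lean document; each statement's English description precedes it below -/
import Mathlib

section
/- Let s > 1, m > 0 and q ≥ 1 be real numbers. Then for every real n ≥ 0 one has n^{s−q} · (T_0^m(n))^q ≤ s · G_0^m(n). -/
open Real

/-- The lower-upper truncation `T_0^m`. -/
noncomputable def T0 (m n : ℝ) : ℝ :=
  if n ≤ 0 then 0 else if n ≤ m then n else m

/-- The truncation `G_0^m` of `n^s/s`. -/
noncomputable def G0 (s m n : ℝ) : ℝ :=
  if n ≤ 0 then 0
  else if n ≤ m then n ^ s / s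
  else (m / (s - 1)) * n ^ (s - 1) - m ^ s / (s * (s - 1))

/-! On `(0, m]` we have `n^{s-q} (T_0^m n)^q = n^s = s G_0^m n`. Beyond `m`, the bound
`m^{q-1} ≤ n^{q-1}` gives `n^{s-q} m^q ≤ m n^{s-1}`, and `s G_0^m n` exceeds `m n^{s-1}` by
`(m n^{s-1} - m^s)/(s-1) ≥ 0`, by the same bound with `s` in place of `q`. -/

section Truncation

variable {s m n : ℝ}

theorem T0_of_le (hn : 0 < n) (hnm : n ≤ m) : T0 m n = n := by
  simp [T0, hn.not_ge, hnm]

theorem T0_of_lt (hn : 0 < n) (hmn : m < n) : T0 m n = m := by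
  simp [T0, hn.not_ge, hmn.not_ge]

theorem G0_of_le (hn : 0 < n) (hnm : n ≤ m) : G0 s m n = n ^ s / s := by
  simp [G0, hn.not_ge, hnm]

theorem G0_of_lt (hn : 0 < n) (hmn : m < n) :
    G0 s m n = (m / (s - 1)) * n ^ (s - 1) - m ^ s / (s * (s - 1)) := by
  simp [G0, hn.not_ge, hmn.not_ge]

theorem mul_G0_of_lt (hs : 1 < s) (hn : 0 < n) (hmn : m < n) :
    s * G0 s m n = m * n ^ (s - 1) + (m * n ^ (s - 1) - m ^ s) / (s - 1) := by
  have hs0 : s ≠ 0 := by positivity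
  have hs1 : s - 1 ≠ 0 := sub_ne_zero.2 hs.ne'
  rw [G0_of_lt hn hmn]
  field_simp
  ring

end Truncation

theorem rpow_le_mul_rpow_sub_one {p m n : ℝ} (hm : 0 ≤ m) (hmn : m ≤ n) (hp : 1 ≤ p) :
    m ^ p ≤ m * n ^ (p - 1) := by
  calc m ^ p = m * m ^ (p - 1) := by
        rw [← rpow_one_add' hm (by linarith), add_sub_cancel]
    _ ≤ m * n ^ (p - 1) := by gcongr

theorem mul_rpow_sub_one_le_mul_G0 {s m n : ℝ} (hs : 1 < s) (hm : 0 ≤ m) (hmn : m < n) :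
    m * n ^ (s - 1) ≤ s * G0 s m n := by
  have hgap : 0 ≤ (m * n ^ (s - 1) - m ^ s) / (s - 1) :=
    div_nonneg (sub_nonneg.2 (rpow_le_mul_rpow_sub_one hm hmn.le hs.le)) (by linarith)
  rw [mul_G0_of_lt hs (hm.trans_lt hmn) hmn]
  linarith

/-- Comparison between the truncations: for `s > 1`, `m > 0`, `q ≥ 1` and `n ≥ 0`,
`n^{s-q} (T_0^m n)^q ≤ s G_0^m n`. -/
theorem rpow_mul_T0_rpow_le (s m q : ℝ) (hs : 1 < s) (hm : 0 < m) (hq : 1 ≤ q) :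
    ∀ n : ℝ, 0 ≤ n → n ^ (s - q) * (T0 m n) ^ q ≤ s * G0 s m n := by
  intro n hn
  rcases hn.eq_or_lt with rfl | hn
  · simp [T0, G0, zero_rpow (by linarith : q ≠ 0)]
  rcases le_or_gt n m with hnm | hmn
  · rw [T0_of_le hn hnm, G0_of_le hn hnm, ← rpow_add hn, sub_add_cancel,
      mul_div_cancel₀ _ (by positivity)]
  · rw [T0_of_lt hn hmn]
    calc n ^ (s - q) * m ^ q ≤ n ^ (s - q) * (m * n ^ (q - 1)) := by
          gcongr; exact rpow_le_mul_rpow_sub_one hm.le hmn.le hq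
      _ = m * n ^ (s - 1) := by
          rw [mul_left_comm, ← rpow_add hn]; ring_nf
      _ ≤ s * G0 s m n := mul_rpow_sub_one_le_mul_G0 hs hm.le hmn
end

section
/- Let s ∈ (1, 2), m > 0, and ε ∈ (0, 1]. Then for every real n ≥ 0 one has G_0^m(n) · n^{s−2} · (n + ε)^{2−s} ≤ (1/s) · (n + 1)^s, with the convention that n^{s−2} = 0 at n = 0. -/
open Real

/-!
Young's inequality shows `G_0^m(n) ≤ n^s / s`, so the left side is at most
`n^{2s-2} (n+ε)^{2-s} / s`; both exponents are nonnegative and `n, n + ε ≤ n + 1`,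
so this is at most `(n+1)^{2s-2} (n+1)^{2-s} / s = (n+1)^s / s`.
-/

/-- Young's inequality with exponents `s` and `s / (s - 1)`, cleared of denominators. -/
lemma mul_mul_rpow_sub_one_le {s a b : ℝ} (hs : 1 < s) (ha : 0 ≤ a) (hb : 0 ≤ b) :
    s * a * b ^ (s - 1) ≤ a ^ s + (s - 1) * b ^ s := by
  have hs0 : 0 < s := by linarith
  have hs1 : 0 < s - 1 := by linarith
  have hyoung := young_inequality_of_nonneg ha (rpow_nonneg hb (s - 1)) (.conjExponent hs)
  rw [← rpow_mul hb, conjExponent, show (s - 1) * (s / (s - 1)) = s by field_simp] at hyoung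
  have hsum : a ^ s / s + b ^ s / (s / (s - 1)) = (a ^ s + (s - 1) * b ^ s) / s := by
    field_simp
  rw [hsum, le_div_iff₀ hs0] at hyoung
  linarith

lemma G0_le_rpow_div {s m n : ℝ} (hs : 1 < s) (hm : 0 ≤ m) (hn : 0 ≤ n) :
    G0 s m n ≤ n ^ s / s := by
  have hs0 : 0 < s := by linarith
  unfold G0
  split_ifs with hn0 hnm
  · positivity
  · exact le_rfl
  · rw [show m / (s - 1) * n ^ (s - 1) - m ^ s / (s * (s - 1))
        = (s * m * n ^ (s - 1) - m ^ s) / (s * (s - 1)) by field_simp,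
      div_le_div_iff₀ (by positivity) hs0]
    nlinarith [mul_mul_rpow_sub_one_le hs hm hn]

lemma rpow_mul_rpow_le_rpow_add {x y z a b : ℝ} (hx : 0 ≤ x) (hxz : x ≤ z) (hy : 0 ≤ y)
    (hyz : y ≤ z) (ha : 0 ≤ a) (hb : 0 ≤ b) :
    x ^ a * y ^ b ≤ z ^ (a + b) := by
  obtain hab | hab := (add_nonneg ha hb).eq_or_lt
  · obtain ⟨rfl, rfl⟩ : a = 0 ∧ b = 0 := ⟨by linarith, by linarith⟩
    simp
  rw [rpow_add' (hx.trans hxz) hab.ne']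
  gcongr
  exact rpow_nonneg (hx.trans hxz) a

/-- For `s ∈ (1,2)`, `m > 0`, `ε ∈ (0,1]` and `n ≥ 0`,
`G_0^m(n) n^{s-2} (n+ε)^{2-s} ≤ (1/s) (n+1)^s`
(with `n^{s-2} = 0` at `n = 0`, as given by `Real.rpow`). -/
theorem G0_mul_rpow_le (s m ε : ℝ) (hs1 : 1 < s) (hs2 : s < 2) (hm : 0 < m)
    (hε0 : 0 < ε) (hε1 : ε ≤ 1) :
    ∀ n : ℝ, 0 ≤ n →
      G0 s m n * n ^ (s - 2) * (n + ε) ^ (2 - s) ≤ (1 / s) * (n + 1) ^ s := by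
  intro n hn
  calc G0 s m n * n ^ (s - 2) * (n + ε) ^ (2 - s)
      ≤ n ^ s / s * n ^ (s - 2) * (n + ε) ^ (2 - s) := by
        gcongr
        exact G0_le_rpow_div hs1 hm.le hn
    _ = (1 / s) * (n ^ (2 * s - 2) * (n + ε) ^ (2 - s)) := by
        -- also at `n = 0`: both sides vanish because `2 * s - 2 ≠ 0`
        rw [show 2 * s - 2 = s + (s - 2) by ring, rpow_add' hn (by linarith)]
        ring
    _ ≤ (1 / s) * (n + 1) ^ s := by
        gcongr
        have h := rpow_mul_rpow_le_rpow_add (y := n + ε) (z := n + 1) hn (by linarith)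
          (by linarith) (by linarith) (by linarith : 0 ≤ 2 * s - 2) (by linarith : 0 ≤ 2 - s)
        rwa [show 2 * s - 2 + (2 - s) = s by ring] at h
end
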